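/- Let A, B, C be bounded linear operators on a complex Hilbert space H with A and B positive. If the 2x2 operator matrix [[A, C*],[C, B]] on H ⊕ H is positive, then w(C)^2 ≤ (1/4)‖A² + B²‖ + (1/2)w(AB). -/

import Mathlib

open ContinuousLinearMap

variable {H : Type*} [NormedAddCommGroup H] [InnerProductSpace ℂ H] [CompleteSpace H]

noncomputable def numRadius (A : H →L[ℂ] H) : ℝ :=
  ⨆ x : {x : H // ‖x‖ = 1}, ‖(inner ℂ (A x) (x : H) : ℂ)‖

noncomputable def blockOp (A B C : H →L[ℂ] H) : WithLp 2 (H × H) →L[ℂ] WithLp 2 (H × H) :=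
  ((WithLp.prodContinuousLinearEquiv 2 ℂ H H).symm : H × H →L[ℂ] WithLp 2 (H × H)) ∘L
    ((A.coprod (adjoint C)).prod (C.coprod B)) ∘L
    ((WithLp.prodContinuousLinearEquiv 2 ℂ H H) : WithLp 2 (H × H) →L[ℂ] H × H)

local notation "⟪" x ", " y "⟫" => @inner ℂ _ _ x y

-- Buzano's inequality
lemma buzano (x u v : H) (hx : ‖x‖ = 1) :
    ‖(⟪u, x⟫ : ℂ) * ⟪x, v⟫‖ ≤ (‖u‖ * ‖v‖ + ‖(⟪u, v⟫ : ℂ)‖) / 2 := by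
  set w : H := ((2 : ℂ) * ⟪x, v⟫) • x - v with hw
  have h1 : ‖w‖ ^ 2 = ‖v‖ ^ 2 := by
    rw [hw, @norm_sub_sq ℂ, inner_smul_left, norm_smul, hx]
    have h2n : ‖(2:ℂ) * ⟪x, v⟫‖ = 2 * ‖(⟪x, v⟫ : ℂ)‖ := by rw [norm_mul]; norm_num
    rw [h2n]
    have h3 : (starRingEnd ℂ) ((2:ℂ) * ⟪x, v⟫) * ⟪x, v⟫
        = (2:ℂ) * ((‖(⟪x, v⟫ : ℂ)‖ : ℝ) : ℂ)^2 := by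
      rw [map_mul, mul_assoc, RCLike.conj_mul]; simp [Complex.ext_iff]
    rw [h3]
    simp [← Complex.ofReal_pow]
    ring
  have hwnorm : ‖w‖ = ‖v‖ := by
    rw [← Real.sqrt_sq (norm_nonneg w), h1, Real.sqrt_sq (norm_nonneg v)]
  have key : (2 : ℂ) * (⟪u, x⟫ * ⟪x, v⟫) = ⟪u, w⟫ + ⟪u, v⟫ := by
    rw [hw, inner_sub_right, inner_smul_right]; ring
  have h2 : ‖(2 : ℂ) * (⟪u, x⟫ * ⟪x, v⟫)‖ ≤ ‖u‖ * ‖v‖ + ‖(⟪u, v⟫ : ℂ)‖ := by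
    rw [key]
    calc ‖(⟪u, w⟫ : ℂ) + ⟪u, v⟫‖ ≤ ‖(⟪u, w⟫ : ℂ)‖ + ‖(⟪u, v⟫ : ℂ)‖ := norm_add_le _ _
    _ ≤ ‖u‖ * ‖w‖ + ‖(⟪u, v⟫ : ℂ)‖ := by gcongr; exact norm_inner_le_norm u w
    _ = ‖u‖ * ‖v‖ + ‖(⟪u, v⟫ : ℂ)‖ := by rw [hwnorm]
  have h2' : ‖(2:ℂ)‖ = 2 := by norm_num
  rw [norm_mul, h2'] at h2
  linarith

lemma keylem (A B C : H →L[ℂ] H) (hA : A.IsPositive) (hB : B.IsPositive)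
    (hblk : (blockOp A B C).IsPositive) (x : H) :
    ‖(⟪C x, x⟫ : ℂ)‖ ^ 2 ≤ Complex.re (⟪A x, x⟫ : ℂ) * Complex.re (⟪B x, x⟫ : ℂ) := by
  set a := Complex.re (⟪A x, x⟫ : ℂ)
  set b := Complex.re (⟪B x, x⟫ : ℂ)
  set c := (⟪C x, x⟫ : ℂ) with hc
  have hquad : ∀ w : H, 0 ≤ a + Complex.re (⟪C x, w⟫ : ℂ) * 2 + Complex.re (⟪B w, w⟫ : ℂ) := by
    intro w
    have h0 := hblk.2 ((WithLp.prodContinuousLinearEquiv 2 ℂ H H).symm (x, w))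
    rw [reApplyInnerSelf_apply] at h0
    have he : (⟪blockOp A B C ((WithLp.prodContinuousLinearEquiv 2 ℂ H H).symm (x, w)),
        ((WithLp.prodContinuousLinearEquiv 2 ℂ H H).symm (x, w))⟫ : ℂ)
        = ⟪A x, x⟫ + ⟪(adjoint C) w, x⟫ + ⟪C x, w⟫ + ⟪B w, w⟫ := by
      simp [blockOp, WithLp.prod_inner_apply, inner_add_left]
      ring
    rw [he] at h0
    have hadj : (⟪(adjoint C) w, x⟫ : ℂ) = starRingEnd ℂ (⟪C x, w⟫ : ℂ) := by
      rw [adjoint_inner_left, ← inner_conj_symm]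
    rw [hadj] at h0
    simp only [RCLike.re_to_complex, Complex.add_re, Complex.conj_re] at h0
    linarith
  have ha : 0 ≤ a := by simpa [reApplyInnerSelf_apply] using hA.2 x
  have hb : 0 ≤ b := by simpa [reApplyInnerSelf_apply] using hB.2 x
  rcases eq_or_ne c 0 with h | h
  · rw [h]
    simpa using mul_nonneg ha hb
  · set θ : ℂ := -(starRingEnd ℂ c) / ‖c‖ with hθ
    have hcnorm : (0:ℝ) < ‖c‖ := norm_pos_iff.mpr h
    have hθc : θ * c = -(‖c‖ : ℂ) := by
      have h2 : Complex.normSq c = ‖c‖ * ‖c‖ := by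
        rw [Complex.normSq_eq_norm_sq]; ring
      rw [hθ, div_mul_eq_mul_div, neg_mul, ← Complex.normSq_eq_conj_mul_self, h2,
        div_eq_iff (by exact_mod_cast hcnorm.ne' : ((‖c‖:ℂ)) ≠ 0)]
      push_cast
      ring
    have hnormθ : ‖θ‖ = 1 := by
      rw [hθ, norm_div, norm_neg, RCLike.norm_conj]
      simp
      exact h
    have hθθ : (starRingEnd ℂ θ) * θ = 1 := by
      rw [RCLike.conj_mul, hnormθ]
      norm_num
    have hs : ∀ s : ℝ, 0 ≤ b * (s * s) + (-(2 * ‖c‖)) * s + a := by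
      intro s
      have := hquad (((s : ℂ) * θ) • x)
      rw [inner_smul_right, map_smul, inner_smul_left, inner_smul_right] at this
      have e1 : Complex.re ((s : ℂ) * θ * c) = s * (-‖c‖) := by
        rw [mul_assoc, hθc]
        simp
      have e2 : Complex.re ((starRingEnd ℂ) ((s:ℂ) * θ) * ((s:ℂ) * θ * ⟪B x, x⟫)) = s * s * b := by
        have : (starRingEnd ℂ) ((s:ℂ) * θ) * ((s:ℂ) * θ * ⟪B x, x⟫)
            = ((s:ℂ) * (s:ℂ)) * (((starRingEnd ℂ θ) * θ) * ⟪B x, x⟫) := by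
          rw [map_mul]
          simp [Complex.conj_ofReal]
          ring
        rw [this, hθθ, one_mul, ← Complex.ofReal_mul, Complex.re_ofReal_mul]
      rw [e1, e2] at this
      linarith
    have hd := discrim_le_zero hs
    rw [discrim] at hd
    nlinarith [hd]

lemma numRadius_nonneg (T : H →L[ℂ] H) : 0 ≤ numRadius T :=
  Real.iSup_nonneg (fun _ => norm_nonneg _)

lemma inner_le_numRadius (T : H →L[ℂ] H) (x : H) (hx : ‖x‖ = 1) :
    ‖(⟪T x, x⟫ : ℂ)‖ ≤ numRadius T := by
  have hbdd : BddAbove (Set.range fun y : {x : H // ‖x‖ = 1} => ‖(⟪T y, (y : H)⟫ : ℂ)‖) := by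
    refine ⟨‖T‖, ?_⟩
    rintro r ⟨y, rfl⟩
    calc ‖(⟪T y, (y : H)⟫ : ℂ)‖ ≤ ‖T (y : H)‖ * ‖(y : H)‖ := norm_inner_le_norm _ _
    _ ≤ ‖T‖ * ‖(y : H)‖ * ‖(y : H)‖ := by gcongr; exact T.le_opNorm _
    _ = ‖T‖ := by rw [y.2]; ring
  exact le_ciSup hbdd ⟨x, hx⟩

theorem stmt2 (A B C : H →L[ℂ] H) (hA : A.IsPositive) (hB : B.IsPositive)
    (hblk : (blockOp A B C).IsPositive) :
    numRadius C ^ 2 ≤ (1 / 4) * ‖A ^ 2 + B ^ 2‖ + (1 / 2) * numRadius (A * B) := by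
  set R : ℝ := (1 / 4) * ‖A ^ 2 + B ^ 2‖ + (1 / 2) * numRadius (A * B) with hR
  have hR0 : 0 ≤ R := by
    have := numRadius_nonneg (A * B)
    have := norm_nonneg (A ^ 2 + B ^ 2)
    rw [hR]; linarith
  have hAadj : adjoint A = A := hA.1.clm_adjoint_eq
  have hBadj : adjoint B = B := hB.1.clm_adjoint_eq
  have main : ∀ x : H, ‖x‖ = 1 → ‖(⟪C x, x⟫ : ℂ)‖ ^ 2 ≤ R := by
    intro x hx
    have h1 := keylem A B C hA hB hblk x
    set a := Complex.re (⟪A x, x⟫ : ℂ)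
    set b := Complex.re (⟪B x, x⟫ : ℂ)
    have ha : 0 ≤ a := by simpa [reApplyInnerSelf_apply] using hA.2 x
    have hb : 0 ≤ b := by simpa [reApplyInnerSelf_apply] using hB.2 x
    -- step 2 : a * b ≤ ‖⟪A x, x⟫ * ⟪x, B x⟫‖
    have h2 : a * b ≤ ‖(⟪A x, x⟫ : ℂ) * ⟪x, B x⟫‖ := by
      rw [norm_mul]
      have e1 : a ≤ ‖(⟪A x, x⟫ : ℂ)‖ := Complex.re_le_norm _
      have e2 : b ≤ ‖(⟪x, B x⟫ : ℂ)‖ := by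
        rw [← inner_conj_symm]
        simp only [RCLike.norm_conj]
        exact Complex.re_le_norm _
      exact mul_le_mul e1 e2 hb (norm_nonneg _)
    have h3 := buzano x (A x) (B x) hx
    -- step 4 : ‖A x‖ * ‖B x‖ ≤ (1/2) * ‖A ^ 2 + B ^ 2‖
    have h4 : ‖A x‖ * ‖B x‖ ≤ (1 / 2) * ‖A ^ 2 + B ^ 2‖ := by
      have hAx : ‖A x‖ ^ 2 = Complex.re (⟪(A ^ 2) x, x⟫ : ℂ) := by
        have : ((A ^ 2) x : H) = A (A x) := by
          rw [pow_two, ContinuousLinearMap.mul_apply]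
        rw [this, ← hAadj, adjoint_inner_left, hAadj]
        have h := inner_self_eq_norm_sq (𝕜 := ℂ) (x := A x)
        simpa [RCLike.re_to_complex] using h.symm
      have hBx : ‖B x‖ ^ 2 = Complex.re (⟪(B ^ 2) x, x⟫ : ℂ) := by
        have : ((B ^ 2) x : H) = B (B x) := by
          rw [pow_two, ContinuousLinearMap.mul_apply]
        rw [this, ← hBadj, adjoint_inner_left, hBadj]
        have h := inner_self_eq_norm_sq (𝕜 := ℂ) (x := B x)
        simpa [RCLike.re_to_complex] using h.symm
      have hsum : ‖A x‖ ^ 2 + ‖B x‖ ^ 2 = Complex.re (⟪(A ^ 2 + B ^ 2) x, x⟫ : ℂ) := by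
        rw [hAx, hBx, add_apply, inner_add_left]
        simp
      have hle : Complex.re (⟪(A ^ 2 + B ^ 2) x, x⟫ : ℂ) ≤ ‖A ^ 2 + B ^ 2‖ := by
        calc Complex.re (⟪(A ^ 2 + B ^ 2) x, x⟫ : ℂ) ≤ ‖(⟪(A ^ 2 + B ^ 2) x, x⟫ : ℂ)‖ :=
          Complex.re_le_norm _
        _ ≤ ‖(A ^ 2 + B ^ 2) x‖ * ‖x‖ := norm_inner_le_norm _ _
        _ ≤ ‖A ^ 2 + B ^ 2‖ * ‖x‖ * ‖x‖ := by gcongr; exact le_opNorm _ _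
        _ = ‖A ^ 2 + B ^ 2‖ := by rw [hx]; ring
      nlinarith [sq_nonneg (‖A x‖ - ‖B x‖)]
    -- step 5 : ‖⟪A x, B x⟫‖ ≤ numRadius (A * B)
    have h5 : ‖(⟪A x, B x⟫ : ℂ)‖ ≤ numRadius (A * B) := by
      have e : (⟪A x, B x⟫ : ℂ) = ⟪x, (A * B) x⟫ := by
        rw [ContinuousLinearMap.mul_apply, ← hAadj, adjoint_inner_right, hAadj]
      rw [e, ← inner_conj_symm]
      simp only [RCLike.norm_conj]
      exact inner_le_numRadius (A * B) x hx
    calc ‖(⟪C x, x⟫ : ℂ)‖ ^ 2 ≤ a * b := h1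
    _ ≤ ‖(⟪A x, x⟫ : ℂ) * ⟪x, B x⟫‖ := h2
    _ ≤ (‖A x‖ * ‖B x‖ + ‖(⟪A x, B x⟫ : ℂ)‖) / 2 := h3
    _ ≤ ((1 / 2) * ‖A ^ 2 + B ^ 2‖ + numRadius (A * B)) / 2 := by linarith
    _ = R := by rw [hR]; ring
  have hsup : numRadius C ≤ Real.sqrt R := by
    apply Real.iSup_le _ (Real.sqrt_nonneg R)
    rintro ⟨x, hx⟩
    have := main x hx
    exact (Real.le_sqrt (norm_nonneg _) hR0).mpr this
  calc numRadius C ^ 2 ≤ Real.sqrt R ^ 2 := pow_le_pow_left₀ (numRadius_nonneg C) hsup 2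
  _ = R := Real.sq_sqrt hR0
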